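/- The purified state reproduces all expectation values of operators on the original systems: let d1, d2, Zt be finite types, p : Zt → ℝ with p z ≥ 0 for all z, φz : Zt → ((d1 × d2) → ℂ) a family of vectors, and let φ : Matrix (d1 × d2) (d1 × d2) ℂ be φ = ∑_z (p z : ℂ) • vecMulVec (φz z) (star ∘ φz z). Define ψ : (d1 × Zt) × (d2 × Zt) → ℂ by ψ((a,z),(b,z')) = if z = z' then (Real.sqrt (p z) : ℂ) * φz z (a,b) else 0. Then for every M : Matrix (d1 × d2) (d1 × d2) ℂ, defining Mext : Matrix ((d1 × Zt) × (d2 × Zt)) ((d1 × Zt) × (d2 × Zt)) ℂ by Mext ((a,z),(b,z')) ((a',w),(b',w')) = (if z = w ∧ z' = w' then M (a,b) (a',b') else 0), one has star ψ ⬝ᵥ (Mext *ᵥ ψ) = trace (M * φ). -/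

import Mathlib

/-!
The extended operator acts as `M` on each block `(z, z')` of the purifying systems, so the
expectation value splits into a sum over `(z, z')` of expectation values of `M` in the blocks
of `ψ`. Only the diagonal blocks `z = z'` are nonzero, and there the block is `√(p z) • φz z`,
contributing `p z * ⟨φz z, M φz z⟩`; this is `p z` times `Tr (M |φz z⟩⟨φz z|)`.
-/

open Matrix

namespace Matrix

variable {R α β Z Z' : Type*} [Fintype α] [Fintype β] [Fintype Z] [Fintype Z']

lemma trace_mul_vecMulVec [CommSemiring R] (M : Matrix α α R) (u v : α → R) :
    (M * vecMulVec u v).trace = v ⬝ᵥ (M *ᵥ u) := by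
  rw [mul_vecMulVec, trace_vecMulVec, dotProduct_comm]

lemma star_smul_dotProduct_mulVec_smul [CommSemiring R] [StarRing R] (M : Matrix α α R)
    (c : R) (v : α → R) :
    star (c • v) ⬝ᵥ (M *ᵥ (c • v)) = (star c * c) * (star v ⬝ᵥ (M *ᵥ v)) := by
  rw [star_smul, mulVec_smul, smul_dotProduct, dotProduct_smul, smul_eq_mul, smul_eq_mul,
    ← mul_assoc]

lemma dotProduct_mulVec_of_eq_ite [NonUnitalNonAssocSemiring R] [DecidableEq Z] [DecidableEq Z']
    (M : Matrix (α × β) (α × β) R) (Mext : Matrix ((α × Z) × (β × Z')) ((α × Z) × (β × Z')) R)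
    (hM : ∀ a z b z' a' w b' w', Mext ((a, z), (b, z')) ((a', w), (b', w')) =
      if z = w ∧ z' = w' then M (a, b) (a', b') else 0)
    (u v : (α × Z) × (β × Z') → R) :
    u ⬝ᵥ (Mext *ᵥ v) = ∑ z, ∑ z',
      (fun i : α × β => u ((i.1, z), (i.2, z'))) ⬝ᵥ (M *ᵥ fun i => v ((i.1, z), (i.2, z'))) := by
  simp only [dotProduct, mulVec, Fintype.sum_prod_type, hM, ite_and, ite_mul, zero_mul,
    Finset.sum_ite_irrel, Finset.sum_ite_eq, Finset.mem_univ, if_true, Finset.sum_const_zero]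
  rw [Finset.sum_comm]
  refine Finset.sum_congr rfl fun z _ => ?_
  conv_rhs => rw [Finset.sum_comm]
  exact Finset.sum_congr rfl fun a _ => Finset.sum_comm

end Matrix

/-- The purified state reproduces all expectation values of operators acting on the
original systems (extended by the identity on the purifying systems). -/
theorem purification_reproduces_expectation_values
    {d1 d2 Zt : Type*} [Fintype d1] [Fintype d2] [Fintype Zt]
    [DecidableEq Zt]
    (p : Zt → ℝ) (hp : ∀ z, 0 ≤ p z)
    (φz : Zt → ((d1 × d2) → ℂ))
    (φ : Matrix (d1 × d2) (d1 × d2) ℂ)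
    (hφ : φ = ∑ z, (p z : ℂ) • vecMulVec (φz z) (star ∘ φz z))
    (ψ : (d1 × Zt) × (d2 × Zt) → ℂ)
    (hψ : ∀ (a : d1) (z : Zt) (b : d2) (z' : Zt),
      ψ ((a, z), (b, z')) =
        if z = z' then (Real.sqrt (p z) : ℂ) * φz z (a, b) else 0)
    (M : Matrix (d1 × d2) (d1 × d2) ℂ)
    (Mext : Matrix ((d1 × Zt) × (d2 × Zt)) ((d1 × Zt) × (d2 × Zt)) ℂ)
    (hM : ∀ (a : d1) (z : Zt) (b : d2) (z' : Zt) (a' : d1) (w : Zt) (b' : d2) (w' : Zt),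
      Mext ((a, z), (b, z')) ((a', w), (b', w')) =
        if z = w ∧ z' = w' then M (a, b) (a', b') else 0) :
    star ψ ⬝ᵥ (Mext *ᵥ ψ) = (M * φ).trace := by
  have hblock (z z' : Zt) : (fun i : d1 × d2 => ψ ((i.1, z), (i.2, z'))) =
      if z = z' then (Real.sqrt (p z) : ℂ) • φz z else 0 := by
    ext i
    split_ifs with h <;> simp [hψ, h]
  have hsqrt (z : Zt) : star (Real.sqrt (p z) : ℂ) * Real.sqrt (p z) = p z := by
    rw [Complex.star_def, Complex.conj_ofReal, ← Complex.ofReal_mul, Real.mul_self_sqrt (hp z)]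
  have hblock_expectation (z z' : Zt) :
      star (fun i : d1 × d2 => ψ ((i.1, z), (i.2, z'))) ⬝ᵥ
        (M *ᵥ fun i => ψ ((i.1, z), (i.2, z'))) =
      if z = z' then (p z : ℂ) * (star (φz z) ⬝ᵥ (M *ᵥ φz z)) else 0 := by
    rw [hblock]
    split_ifs
    · rw [star_smul_dotProduct_mulVec_smul, hsqrt]
    · simp
  calc star ψ ⬝ᵥ (Mext *ᵥ ψ)
      = ∑ z, ∑ z', star (fun i : d1 × d2 => ψ ((i.1, z), (i.2, z'))) ⬝ᵥ
          (M *ᵥ fun i => ψ ((i.1, z), (i.2, z'))) := dotProduct_mulVec_of_eq_ite M Mext hM _ _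
    _ = ∑ z, (p z : ℂ) * (star (φz z) ⬝ᵥ (M *ᵥ φz z)) := by
      simp only [hblock_expectation, Finset.sum_ite_eq, Finset.mem_univ, if_true]
    _ = (M * φ).trace := by
      simp only [hφ, Matrix.mul_sum, trace_sum, mul_smul_comm, trace_smul, trace_mul_vecMulVec,
        smul_eq_mul]
      rfl
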